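/- Let X be a continuous martingale with X_0 = 1, and define X̃_t = X_t + (X_t − 1)·1_{{T_{3/4} ≥ t}} + (1/8 − X_t/2)·1_{{T_{3/4} < t ≤ T_{1/4}}}, where T_c is the first hitting time of c by X. Then X̃ is a continuous process, X̃ hits 0 exactly when X hits 0 (the hitting times of 0 coincide), and X̃_{T_{3/4}} = 1/2 ≠ 3/4 = X_{T_{3/4}} on {T_{3/4} < T_0}. -/

import Mathlib

open MeasureTheory
open scoped Classical

/-- First hitting time of level `c` by the real-valued process `X`
(value `⊤` if `c` is never hit). -/
noncomputable def hitT {Ω : Type*} (X : NNReal → Ω → ℝ) (c : ℝ) (ω : Ω) : ENNReal :=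
  sInf {t : ENNReal | ∃ u : NNReal, (u : ENNReal) = t ∧ X u ω = c}

/-- The process `X̃` of Appendix A:
`X̃_t = X_t + (X_t − 1)·1_{T_{3/4} ≥ t} + (1/8 − X_t/2)·1_{T_{3/4} < t ≤ T_{1/4}}`. -/
noncomputable def tildeX {Ω : Type*} (X : NNReal → Ω → ℝ) (t : NNReal) (ω : Ω) : ℝ :=
  X t ω
    + (X t ω - 1) * (if (t : ENNReal) ≤ hitT X (3 / 4) ω then 1 else 0)
    + (1 / 8 - X t ω / 2) *
        (if hitT X (3 / 4) ω < (t : ENNReal) ∧ (t : ENNReal) ≤ hitT X (1 / 4) ω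
          then 1 else 0)

section Aux

variable {Ω : Type*} {X : NNReal → Ω → ℝ} {ω : Ω}

lemma hitT_le_of_eq {c : ℝ} {u : NNReal} (h : X u ω = c) : hitT X c ω ≤ u :=
  sInf_le ⟨u, rfl, h⟩

lemma hitT_attained (hc : Continuous fun t => X t ω) {c : ℝ}
    (h : hitT X c ω ≠ ⊤) : X (hitT X c ω).toNNReal ω = c := by
  set F : Set NNReal := {u | X u ω = c} with hF
  have hFc : IsClosed F := isClosed_eq hc continuous_const
  have hA : {t : ENNReal | ∃ u : NNReal, (u : ENNReal) = t ∧ X u ω = c}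
      = (fun u : NNReal => (u : ENNReal)) '' F := by
    ext t
    constructor
    · rintro ⟨u, rfl, hu⟩; exact ⟨u, hu, rfl⟩
    · rintro ⟨u, hu, rfl⟩; exact ⟨u, rfl, hu⟩
  have hne : F.Nonempty := by
    by_contra hemp
    rw [Set.not_nonempty_iff_eq_empty] at hemp
    apply h
    rw [hitT, hA, hemp]
    simp
  have key : hitT X c ω = ((sInf F : NNReal) : ENNReal) := by
    rw [hitT, hA, sInf_image, ENNReal.coe_sInf hne]
  rw [key, ENNReal.toNNReal_coe]
  exact hFc.csInf_mem hne (OrderBot.bddBelow F)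

lemma exists_hit (hc : Continuous fun t => X t ω) {a b : NNReal} (hab : a ≤ b)
    {c : ℝ} (h1 : X b ω ≤ c) (h2 : c ≤ X a ω) :
    ∃ v : NNReal, a ≤ v ∧ v ≤ b ∧ X v ω = c := by
  obtain ⟨v, hv, hvc⟩ :=
    intermediate_value_Icc' hab hc.continuousOn (Set.mem_Icc.2 ⟨h1, h2⟩)
  exact ⟨v, hv.1, hv.2, hvc⟩

/-- Before hitting `3/4` the process stays above `3/4`. -/
lemma ge34 (hc : Continuous fun t => X t ω) (h0 : X 0 ω = 1) {u : NNReal}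
    (hu : (u : ENNReal) ≤ hitT X (3 / 4) ω) : 3 / 4 ≤ X u ω := by
  by_contra hlt
  push_neg at hlt
  obtain ⟨v, -, hvu, hv⟩ := exists_hit hc (zero_le : (0 : NNReal) ≤ u) hlt.le (by rw [h0]; norm_num)
  have h1 : hitT X (3 / 4) ω ≤ v := hitT_le_of_eq hv
  have h2 : (u : ENNReal) = v :=
    le_antisymm (hu.trans h1) (ENNReal.coe_le_coe.2 hvu)
  have h3 : u = v := by exact_mod_cast h2
  rw [h3, hv] at hlt
  norm_num at hlt

/-- One must hit `3/4` before hitting any level `c ≤ 3/4`. -/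
lemma hitT34_le (hc : Continuous fun t => X t ω) (h0 : X 0 ω = 1) {c : ℝ}
    (hc1 : c ≤ 3 / 4) : hitT X (3 / 4) ω ≤ hitT X c ω := by
  apply le_sInf
  rintro t ⟨u, rfl, hu⟩
  obtain ⟨v, -, hvu, hv⟩ := exists_hit (c := 3 / 4) hc (zero_le : (0 : NNReal) ≤ u)
    (by rw [hu]; exact hc1) (by rw [h0]; norm_num)
  exact (hitT_le_of_eq hv).trans (ENNReal.coe_le_coe.2 hvu)

/-- Between hitting `3/4` and hitting `1/4` the process stays above `1/4`. -/
lemma ge14 (hc : Continuous fun t => X t ω) {u : NNReal}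
    (h1 : hitT X (3 / 4) ω < (u : ENNReal)) (h2 : (u : ENNReal) ≤ hitT X (1 / 4) ω) :
    1 / 4 ≤ X u ω := by
  have hT : hitT X (3 / 4) ω ≠ ⊤ := ne_top_of_lt h1
  set T' := (hitT X (3 / 4) ω).toNNReal with hT'def
  have hTT' : (T' : ENNReal) = hitT X (3 / 4) ω := ENNReal.coe_toNNReal hT
  have hXT : X T' ω = 3 / 4 := hitT_attained hc hT
  have hT'u : T' ≤ u := by
    have : (T' : ENNReal) ≤ u := by rw [hTT']; exact h1.le
    exact_mod_cast this
  by_contra hlt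
  push_neg at hlt
  obtain ⟨v, -, hvu, hv⟩ := exists_hit hc hT'u hlt.le (by rw [hXT]; norm_num)
  have h3 : (u : ENNReal) = v :=
    le_antisymm (h2.trans (hitT_le_of_eq hv)) (ENNReal.coe_le_coe.2 hvu)
  have h4 : u = v := by exact_mod_cast h3
  rw [h4, hv] at hlt
  norm_num at hlt

lemma tildeX_eq_zero_iff (hc : Continuous fun t => X t ω) (h0 : X 0 ω = 1)
    (u : NNReal) : tildeX X u ω = 0 ↔ X u ω = 0 := by
  unfold tildeX
  by_cases hA : (u : ENNReal) ≤ hitT X (3 / 4) ω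
  · rw [if_pos hA, if_neg (fun h => absurd h.1 (not_lt.2 hA))]
    have := ge34 hc h0 hA
    constructor <;> intro h <;> nlinarith
  · push_neg at hA
    by_cases hS : (u : ENNReal) ≤ hitT X (1 / 4) ω
    · rw [if_neg (not_le.2 hA), if_pos ⟨hA, hS⟩]
      have := ge14 hc hA hS
      constructor <;> intro h <;> nlinarith
    · rw [if_neg (not_le.2 hA), if_neg (fun h => hS h.2)]
      constructor <;> intro h <;> linarith

end Aux

/-- Appendix A example: for a continuous martingale `X` started at `1`, the process `X̃`
is continuous, hits `0` exactly when `X` does (the hitting times of `0` coincide), and on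
`{T_{3/4} < T_0}` one has `X̃_{T_{3/4}} = 1/2 ≠ 3/4 = X_{T_{3/4}}`. -/
theorem tildeX_properties
    {Ω : Type*} {m : MeasurableSpace Ω} {μ : Measure Ω} [IsProbabilityMeasure μ]
    {ℱ : Filtration NNReal m} (X : NNReal → Ω → ℝ)
    (hmart : Martingale X ℱ μ)
    (hcont : ∀ ω, Continuous fun t => X t ω)
    (h0 : ∀ ω, X 0 ω = 1) :
    (∀ ω, Continuous fun t => tildeX X t ω)
    ∧ (∀ ω, hitT (tildeX X) 0 ω = hitT X 0 ω)
    ∧ ∀ ω, hitT X (3 / 4) ω < hitT X 0 ω →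
        tildeX X ((hitT X (3 / 4) ω).toNNReal) ω = 1 / 2
        ∧ X ((hitT X (3 / 4) ω).toNNReal) ω = 3 / 4 := by
  refine ⟨fun ω => ?_, fun ω => ?_, fun ω hlt => ?_⟩
  · -- continuity
    by_cases hT : hitT X (3 / 4) ω = ⊤
    · have heq : (fun t => tildeX X t ω) = fun t => 2 * X t ω - 1 := by
        funext t
        unfold tildeX
        rw [if_pos (le_of_le_of_eq le_top hT.symm),
          if_neg (fun h => absurd (hT ▸ h.1) (not_top_lt))]
        ring
      rw [heq]
      exact (continuous_const.mul (hcont ω)).sub continuous_const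
    · set T' := (hitT X (3 / 4) ω).toNNReal with hT'def
      have hTT' : (T' : ENNReal) = hitT X (3 / 4) ω := ENNReal.coe_toNNReal hT
      have hXT : X T' ω = 3 / 4 := hitT_attained (hcont ω) hT
      by_cases hS : hitT X (1 / 4) ω = ⊤
      · have heq : (fun t => tildeX X t ω)
            = fun t => if t ≤ T' then 2 * X t ω - 1 else X t ω / 2 + 1 / 8 := by
          funext t
          unfold tildeX
          by_cases h : t ≤ T'
          · have h1 : (t : ENNReal) ≤ hitT X (3 / 4) ω := by
              rw [← hTT']; exact_mod_cast h
            rw [if_pos h1, if_neg (fun hh => absurd hh.1 (not_lt.2 h1)), if_pos h]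
            ring
          · have h1 : hitT X (3 / 4) ω < (t : ENNReal) := by
              rw [← hTT']; exact_mod_cast not_le.1 h
            rw [if_neg (not_le.2 h1),
              if_pos ⟨h1, le_of_le_of_eq le_top hS.symm⟩, if_neg h]
            ring
        rw [heq]
        refine Continuous.if_le ((continuous_const.mul (hcont ω)).sub continuous_const)
          (((hcont ω).div_const 2).add continuous_const) continuous_id continuous_const
          fun t ht => ?_
        have : X t ω = 3 / 4 := by rw [show t = T' from ht]; exact hXT
        rw [this]; norm_num
      · set S' := (hitT X (1 / 4) ω).toNNReal with hS'def
        have hSS' : (S' : ENNReal) = hitT X (1 / 4) ω := ENNReal.coe_toNNReal hS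
        have hXS : X S' ω = 1 / 4 := hitT_attained (hcont ω) hS
        have hTS : hitT X (3 / 4) ω ≤ hitT X (1 / 4) ω :=
          hitT34_le (hcont ω) (h0 ω) (by norm_num)
        have hT'S' : T' ≤ S' := by
          have : (T' : ENNReal) ≤ S' := by rw [hTT', hSS']; exact hTS
          exact_mod_cast this
        have heq : (fun t => tildeX X t ω)
            = fun t => if t ≤ T' then 2 * X t ω - 1
                else if t ≤ S' then X t ω / 2 + 1 / 8 else X t ω := by
          funext t
          unfold tildeX
          by_cases h : t ≤ T'
          · have h1 : (t : ENNReal) ≤ hitT X (3 / 4) ω := by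
              rw [← hTT']; exact_mod_cast h
            rw [if_pos h1, if_neg (fun hh => absurd hh.1 (not_lt.2 h1)), if_pos h]
            ring
          · have h1 : hitT X (3 / 4) ω < (t : ENNReal) := by
              rw [← hTT']; exact_mod_cast not_le.1 h
            by_cases h2 : t ≤ S'
            · have h2' : (t : ENNReal) ≤ hitT X (1 / 4) ω := by
                rw [← hSS']; exact_mod_cast h2
              rw [if_neg (not_le.2 h1), if_pos ⟨h1, h2'⟩, if_neg h, if_pos h2]
              ring
            · have h2' : ¬ (t : ENNReal) ≤ hitT X (1 / 4) ω := by
                rw [← hSS']; exact_mod_cast h2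
              rw [if_neg (not_le.2 h1), if_neg (fun hh => h2' hh.2), if_neg h,
                if_neg h2]
              ring
        rw [heq]
        have hinner : Continuous fun t => if t ≤ S' then X t ω / 2 + 1 / 8 else X t ω := by
          refine Continuous.if_le (((hcont ω).div_const 2).add continuous_const)
            (hcont ω) continuous_id continuous_const fun t ht => ?_
          have : X t ω = 1 / 4 := by rw [show t = S' from ht]; exact hXS
          rw [this]; norm_num
        refine Continuous.if_le ((continuous_const.mul (hcont ω)).sub continuous_const)
          hinner continuous_id continuous_const fun t ht => ?_
        have ht' : t = T' := ht
        rw [ht', if_pos hT'S', hXT]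
        norm_num
  · -- hitting times of 0 coincide
    unfold hitT
    congr 1
    ext t
    constructor
    · rintro ⟨u, rfl, hu⟩
      exact ⟨u, rfl, (tildeX_eq_zero_iff (hcont ω) (h0 ω) u).1 hu⟩
    · rintro ⟨u, rfl, hu⟩
      exact ⟨u, rfl, (tildeX_eq_zero_iff (hcont ω) (h0 ω) u).2 hu⟩
  · -- values at T_{3/4}
    have hT : hitT X (3 / 4) ω ≠ ⊤ := ne_top_of_lt hlt
    have hXT : X (hitT X (3 / 4) ω).toNNReal ω = 3 / 4 := hitT_attained (hcont ω) hT
    refine ⟨?_, hXT⟩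
    unfold tildeX
    have hTT' : ((hitT X (3 / 4) ω).toNNReal : ENNReal) = hitT X (3 / 4) ω :=
      ENNReal.coe_toNNReal hT
    rw [if_pos (le_of_eq hTT'), if_neg (fun h => absurd (hTT' ▸ h.1) (lt_irrefl _)),
      hXT]
    norm_num
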